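/- Intersection Power Cell Lemma: assume the nondegeneracy condition, that ‖p − q‖ < 2r, and that (B_r(p) ∩ B_r(q)) \ Z_0(α) ≠ ∅ (equivalently, the interior of Z(α) meets B_r(p) ∩ B_r(q)). Then U_α ∩ ∂(B_r(p) ∩ B_r(q)) ⊆ Z_0(α), and the inclusion map of U_α ∩ ∂(B_r(p) ∩ B_r(q)) into Z_0(α) is a homotopy equivalence; indeed, U_α ∩ ∂(B_r(p) ∩ B_r(q)) is a strong deformation retract of Z_0(α), a deformation retraction being given by radial projection from any point y in int Z(α) ∩ B_r(p) ∩ B_r(q) together with the straight-line homotopy. -/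

import Mathlib

/-!
`Z(α)` is convex, being cut out by finitely many half-spaces: `‖x - p‖² - ‖x - u‖²` is affine in
`x`. Hence a ray from a point `y ∈ int Z(α)` never re-enters `int Z(α)` once it has left it, so
pushing `x ∈ Z₀(α)` along its ray from `y` out to the boundary of the lens
`B_r(p) ∩ B_r(q)`, and every point of that straight-line homotopy, stays in `Z₀(α)`. The exit
time from each ball is the positive root of a quadratic in the ray parameter, so it is
continuous in `x`; the exit time from the lens is the smaller of the two. Outside `U_α` all the
power inequalities are strict, so `Z₀(α) ⊆ U_α`. Conversely, a point of `U_α` on the sphere of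
`p` meets the inequality for its nearest site `u ≠ p` with equality, so it lies on the boundary
of a half-space containing `Z(α)` and not in `int Z(α)`.
-/

open Metric Set

noncomputable section

/-- The distance function to a finite point set `U`. -/
def distU {k : ℕ} (U : Finset (EuclideanSpace ℝ (Fin k))) (x : EuclideanSpace ℝ (Fin k)) : ℝ :=
  Metric.infDist x (U : Set (EuclideanSpace ℝ (Fin k)))

/-- The α-offset `U_α` of a finite point set `U`. -/
def offsetU {k : ℕ} (U : Finset (EuclideanSpace ℝ (Fin k))) (α : ℝ) :
    Set (EuclideanSpace ℝ (Fin k)) :=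
  {x | distU U x ≤ α}

/-- The power cell of the ball `B_r(p)` at level `α`. -/
def pcell {k : ℕ} (U : Finset (EuclideanSpace ℝ (Fin k))) (p : EuclideanSpace ℝ (Fin k))
    (r α : ℝ) : Set (EuclideanSpace ℝ (Fin k)) :=
  {x | ∀ u ∈ U, dist x p ^ 2 - r ^ 2 ≤ dist x u ^ 2 - α ^ 2}

/-- `Z(α) = P(α) ∩ Q(α)`. -/
def Zcell {k : ℕ} (U : Finset (EuclideanSpace ℝ (Fin k))) (p q : EuclideanSpace ℝ (Fin k))
    (r α : ℝ) : Set (EuclideanSpace ℝ (Fin k)) :=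
  pcell U p r α ∩ pcell U q r α

/-- `Z_0(α) = (B_r(p) ∩ B_r(q)) \ int Z(α)`. -/
def Z0 {k : ℕ} (U : Finset (EuclideanSpace ℝ (Fin k))) (p q : EuclideanSpace ℝ (Fin k))
    (r α : ℝ) : Set (EuclideanSpace ℝ (Fin k)) :=
  (closedBall p r ∩ closedBall q r) \ interior (Zcell U p q r α)

open scoped RealInnerProductSpace

section InnerProductSpace

variable {E : Type*} [NormedAddCommGroup E] [InnerProductSpace ℝ E]

lemma interior_setOf_inner_le {w : E} (hw : w ≠ 0) (b : ℝ) :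
    interior {x : E | ⟪w, x⟫ ≤ b} = {x | ⟪w, x⟫ < b} := by
  have hf : innerSL ℝ w ≠ 0 := fun h => hw (by simpa using congrArg (· w) h)
  have := ((innerSL ℝ w).isOpenMap_of_ne_zero hf).preimage_interior_eq_interior_preimage
    (innerSL ℝ w).continuous (Iic b)
  rw [interior_Iic] at this
  exact this.symm

lemma dist_sq_sub_dist_sq_eq_inner (x u c : E) :
    dist x c ^ 2 - dist x u ^ 2 = 2 * ⟪u - c, x⟫ + (‖c‖ ^ 2 - ‖u‖ ^ 2) := by
  rw [dist_eq_norm, dist_eq_norm, norm_sub_sq_real, norm_sub_sq_real, inner_sub_left,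
    real_inner_comm x u, real_inner_comm x c]
  ring

end InnerProductSpace

section TopologicalVectorSpace

variable {E : Type*} [AddCommGroup E] [Module ℝ E] [TopologicalSpace E] [IsTopologicalAddGroup E]

lemma Convex.mem_interior_of_add_smul_sub_mem_interior [ContinuousConstSMul ℝ E] {s : Set E}
    (hs : Convex ℝ s) {x y : E} (hy : y ∈ interior s) {a : ℝ} (ha : 1 ≤ a)
    (h : y + a • (x - y) ∈ interior s) : x ∈ interior s := by
  have ha0 : 0 < a := one_pos.trans_le ha
  have hx : y + a⁻¹ • (y + a • (x - y) - y) = x := by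
    rw [add_sub_cancel_left, smul_smul, inv_mul_cancel₀ ha0.ne', one_smul, add_sub_cancel]
  simpa only [hx] using hs.add_smul_sub_mem_interior' (subset_closure (interior_subset hy)) h
    ⟨inv_pos.2 ha0, inv_le_one_of_one_le₀ ha⟩

lemma exists_homotopic_of_segment_retraction [ContinuousSMul ℝ E] {A X : Set E}
    (hAX : A ⊆ X) {j : E → E} (hj : ContinuousOn j X) (hjA : ∀ x ∈ X, j x ∈ A)
    (hjid : ∀ x ∈ A, j x = x)
    (hseg : ∀ x ∈ X, ∀ t ∈ Icc (0 : ℝ) 1, (1 - t) • x + t • j x ∈ X) :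
    ∃ g : C(X, A),
      ((⟨inclusion hAX, continuous_inclusion hAX⟩ : C(A, X)).comp g).Homotopic
        (ContinuousMap.id _) ∧
      (g.comp ⟨inclusion hAX, continuous_inclusion hAX⟩).Homotopic (ContinuousMap.id _) := by
  have hjX : Continuous fun x : X => j x := continuousOn_iff_continuous_domRestrict.1 hj
  refine ⟨⟨fun x => ⟨j x, hjA x x.2⟩, hjX.subtype_mk _⟩, ?_, ?_⟩
  · refine ContinuousMap.Homotopic.symm ⟨
      { toFun := fun tx => ⟨(1 - (tx.1 : ℝ)) • (tx.2 : E) + (tx.1 : ℝ) • j tx.2,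
          hseg _ tx.2.2 _ tx.1.2⟩
        continuous_toFun := Continuous.subtype_mk
          (((continuous_const.sub (continuous_subtype_val.comp continuous_fst)).smul
            (continuous_subtype_val.comp continuous_snd)).add
            ((continuous_subtype_val.comp continuous_fst).smul (hjX.comp continuous_snd))) _
        map_zero_left := fun x => by simp
        map_one_left := fun x => by simp }⟩
  · convert ContinuousMap.Homotopic.refl _
    exact ContinuousMap.ext fun x => Subtype.ext (hjid x x.2).symm

end TopologicalVectorSpace

def quadMaxRoot (a b c : ℝ) : ℝ := (-b + √(b ^ 2 - 4 * a * c)) / (2 * a)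

section QuadMaxRoot

variable {a b c : ℝ}

lemma quadMaxRoot_isRoot (ha : 0 < a) (hc : c ≤ 0) :
    a * quadMaxRoot a b c ^ 2 + b * quadMaxRoot a b c + c = 0 := by
  have hsq := Real.sq_sqrt (show 0 ≤ b ^ 2 - 4 * a * c by nlinarith)
  unfold quadMaxRoot
  set w := √(b ^ 2 - 4 * a * c)
  field_simp
  linear_combination hsq

lemma quad_nonpos_iff_le_quadMaxRoot (ha : 0 < a) (hc : c ≤ 0) {s : ℝ} (hs : 0 ≤ s) :
    a * s ^ 2 + b * s + c ≤ 0 ↔ s ≤ quadMaxRoot a b c := by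
  set w := √(b ^ 2 - 4 * a * c)
  have hw : w ^ 2 = b ^ 2 - 4 * a * c := Real.sq_sqrt (by nlinarith)
  have hw0 : 0 ≤ w := Real.sqrt_nonneg _
  rw [quadMaxRoot, le_div_iff₀ (by positivity)]
  constructor
  · intro h
    nlinarith [abs_le_of_sq_le_sq' (show (2 * a * s + b) ^ 2 ≤ w ^ 2 by nlinarith) hw0]
  · intro h
    -- `w ≥ |b|` because `c ≤ 0`, so `2as + b ≥ -w` on `s ≥ 0`
    have hbw : -w ≤ b := by nlinarith
    nlinarith [mul_nonneg ha.le hs]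

lemma quadMaxRoot_eq_of_isRoot (ha : 0 < a) (hc : c ≤ 0) {s : ℝ} (hs : 0 < s)
    (h : a * s ^ 2 + b * s + c = 0) : quadMaxRoot a b c = s := by
  set R := quadMaxRoot a b c
  have hR := quadMaxRoot_isRoot (b := b) ha hc
  have hsR : s ≤ R := (quad_nonpos_iff_le_quadMaxRoot ha hc hs.le).1 h.le
  by_contra hne
  have hlt : s < R := lt_of_le_of_ne hsR (Ne.symm hne)
  have hsum : a * (R + s) + b = 0 := by
    have : (R - s) * (a * (R + s) + b) = 0 := by linear_combination hR - h
    exact (mul_eq_zero.1 this).resolve_left (by linarith)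
  nlinarith [mul_pos (mul_pos ha hs) (hs.trans hlt)]

end QuadMaxRoot

section RayExitTime

variable {E : Type*} [NormedAddCommGroup E]

lemma norm_sub_sq_sub_sq_nonpos {c y : E} {r : ℝ} (hy : y ∈ closedBall c r) :
    ‖y - c‖ ^ 2 - r ^ 2 ≤ 0 := by
  rw [mem_closedBall, dist_eq_norm] at hy
  nlinarith [norm_nonneg (y - c)]

variable [InnerProductSpace ℝ E]

def rayExitTime (c : E) (r : ℝ) (y v : E) : ℝ :=
  quadMaxRoot (‖v‖ ^ 2) (2 * ⟪y - c, v⟫) (‖y - c‖ ^ 2 - r ^ 2)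

lemma dist_add_smul_sq_sub_sq (c y v : E) (r s : ℝ) :
    dist (y + s • v) c ^ 2 - r ^ 2 =
      ‖v‖ ^ 2 * s ^ 2 + 2 * ⟪y - c, v⟫ * s + (‖y - c‖ ^ 2 - r ^ 2) := by
  rw [dist_eq_norm, add_sub_right_comm, norm_add_sq_real, real_inner_smul_right, norm_smul,
    Real.norm_eq_abs, mul_pow, sq_abs]
  ring

variable {c y v : E} {r : ℝ}

lemma add_smul_mem_closedBall_iff_le_rayExitTime (hy : y ∈ closedBall c r) (hv : v ≠ 0)
    {s : ℝ} (hs : 0 ≤ s) : y + s • v ∈ closedBall c r ↔ s ≤ rayExitTime c r y v := by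
  have hr : 0 ≤ r := dist_nonneg.trans hy
  rw [rayExitTime, ← quad_nonpos_iff_le_quadMaxRoot (by positivity)
    (norm_sub_sq_sub_sq_nonpos hy) hs, ← dist_add_smul_sq_sub_sq, mem_closedBall,
    sub_nonpos, sq_le_sq₀ dist_nonneg hr]

lemma rayExitTime_nonneg (hy : y ∈ closedBall c r) (hv : v ≠ 0) : 0 ≤ rayExitTime c r y v :=
  (add_smul_mem_closedBall_iff_le_rayExitTime hy hv le_rfl).1 (by rwa [zero_smul, add_zero])

lemma dist_add_rayExitTime_smul (hy : y ∈ closedBall c r) (hv : v ≠ 0) :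
    dist (y + rayExitTime c r y v • v) c = r := by
  have hr : 0 ≤ r := dist_nonneg.trans hy
  have h := quadMaxRoot_isRoot (b := 2 * ⟪y - c, v⟫) (by positivity : 0 < ‖v‖ ^ 2)
    (norm_sub_sq_sub_sq_nonpos hy)
  rw [← rayExitTime, ← dist_add_smul_sq_sub_sq, sub_eq_zero] at h
  exact (sq_eq_sq₀ dist_nonneg hr).1 h

lemma rayExitTime_eq_one (hy : y ∈ closedBall c r) (hv : v ≠ 0) (h : dist (y + v) c = r) :
    rayExitTime c r y v = 1 :=
  quadMaxRoot_eq_of_isRoot (by positivity) (norm_sub_sq_sub_sq_nonpos hy) one_pos <| by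
    rw [← dist_add_smul_sq_sub_sq, one_smul, h, sub_self]

lemma continuousOn_rayExitTime (c : E) (r : ℝ) (y : E) :
    ContinuousOn (rayExitTime c r y) {v | v ≠ 0} := by
  unfold rayExitTime quadMaxRoot
  refine ContinuousOn.div (by fun_prop) (by fun_prop) fun v hv => ?_
  have : v ≠ 0 := hv
  positivity

end RayExitTime

lemma mem_lens_of_mem_frontier {X : Type*} [PseudoMetricSpace X] {p q x : X} {r : ℝ}
    (hx : x ∈ frontier (closedBall p r ∩ closedBall q r)) :
    x ∈ closedBall p r ∩ closedBall q r :=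
  (isClosed_closedBall.inter isClosed_closedBall).frontier_subset hx

section Lens

variable {E : Type*} [NormedAddCommGroup E] [NormedSpace ℝ E] {p q x : E} {r : ℝ}

lemma frontier_closedBall_inter_closedBall (hr : r ≠ 0) :
    frontier (closedBall p r ∩ closedBall q r) =
      (closedBall p r ∩ closedBall q r) \ (ball p r ∩ ball q r) := by
  rw [(isClosed_closedBall.inter isClosed_closedBall).frontier_eq, interior_inter,
    interior_closedBall p hr, interior_closedBall q hr]

lemma dist_eq_or_dist_eq_of_mem_frontier (hr : r ≠ 0)
    (hx : x ∈ frontier (closedBall p r ∩ closedBall q r)) : dist x p = r ∨ dist x q = r := by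
  rw [frontier_closedBall_inter_closedBall hr] at hx
  obtain ⟨hxK, hxball⟩ := hx
  by_contra! h
  exact hxball ⟨mem_ball.2 (lt_of_le_of_ne hxK.1 h.1), mem_ball.2 (lt_of_le_of_ne hxK.2 h.2)⟩

end Lens

section RadialProjection

variable {E : Type*} [NormedAddCommGroup E] [InnerProductSpace ℝ E] {p q y x : E} {r : ℝ}

def lensExitTime (p q : E) (r : ℝ) (y v : E) : ℝ :=
  min (rayExitTime p r y v) (rayExitTime q r y v)

def lensRadialProj (p q : E) (r : ℝ) (y x : E) : E :=
  y + lensExitTime p q r y (x - y) • (x - y)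

lemma add_smul_mem_lens_iff_le_lensExitTime (hy : y ∈ closedBall p r ∩ closedBall q r)
    {v : E} (hv : v ≠ 0) {s : ℝ} (hs : 0 ≤ s) :
    y + s • v ∈ closedBall p r ∩ closedBall q r ↔ s ≤ lensExitTime p q r y v := by
  rw [lensExitTime, le_min_iff, mem_inter_iff,
    add_smul_mem_closedBall_iff_le_rayExitTime hy.1 hv hs,
    add_smul_mem_closedBall_iff_le_rayExitTime hy.2 hv hs]

lemma one_le_lensExitTime (hy : y ∈ closedBall p r ∩ closedBall q r)
    (hx : x ∈ closedBall p r ∩ closedBall q r) (hxy : x ≠ y) :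
    1 ≤ lensExitTime p q r y (x - y) :=
  (add_smul_mem_lens_iff_le_lensExitTime hy (sub_ne_zero.2 hxy) zero_le_one).1 <| by
    rwa [one_smul, add_sub_cancel]

lemma lensExitTime_nonneg (hy : y ∈ closedBall p r ∩ closedBall q r) {v : E} (hv : v ≠ 0) :
    0 ≤ lensExitTime p q r y v :=
  le_min (rayExitTime_nonneg hy.1 hv) (rayExitTime_nonneg hy.2 hv)

lemma lensRadialProj_mem_frontier (hr : r ≠ 0) (hy : y ∈ closedBall p r ∩ closedBall q r)
    (hxy : x ≠ y) : lensRadialProj p q r y x ∈ frontier (closedBall p r ∩ closedBall q r) := by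
  have hv : x - y ≠ 0 := sub_ne_zero.2 hxy
  rw [frontier_closedBall_inter_closedBall hr]
  refine ⟨(add_smul_mem_lens_iff_le_lensExitTime hy hv (lensExitTime_nonneg hy hv)).2 le_rfl,
    fun hball => ?_⟩
  rcases min_choice (rayExitTime p r y (x - y)) (rayExitTime q r y (x - y)) with h | h
  · exact (mem_ball.1 hball.1).ne (by
      rw [lensRadialProj, lensExitTime, h, dist_add_rayExitTime_smul hy.1 hv])
  · exact (mem_ball.1 hball.2).ne (by
      rw [lensRadialProj, lensExitTime, h, dist_add_rayExitTime_smul hy.2 hv])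

lemma lensRadialProj_eq_self (hr : r ≠ 0) (hy : y ∈ closedBall p r ∩ closedBall q r)
    (hx : x ∈ frontier (closedBall p r ∩ closedBall q r)) : lensRadialProj p q r y x = x := by
  rcases eq_or_ne x y with rfl | hxy
  · simp [lensRadialProj]
  have hv : x - y ≠ 0 := sub_ne_zero.2 hxy
  have hx' : y + (x - y) = x := add_sub_cancel y x
  have hone : lensExitTime p q r y (x - y) = 1 := by
    refine le_antisymm ?_ (one_le_lensExitTime hy (mem_lens_of_mem_frontier hx) hxy)
    rcases dist_eq_or_dist_eq_of_mem_frontier hr hx with hxp | hxq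
    · exact (min_le_left _ _).trans_eq (rayExitTime_eq_one hy.1 hv (by rwa [hx']))
    · exact (min_le_right _ _).trans_eq (rayExitTime_eq_one hy.2 hv (by rwa [hx']))
  rw [lensRadialProj, hone, one_smul, hx']

lemma continuousOn_lensRadialProj (p q : E) (r : ℝ) (y : E) :
    ContinuousOn (lensRadialProj p q r y) {x | x ≠ y} := by
  have hsub : ContinuousOn (fun x : E => x - y) {x | x ≠ y} := by fun_prop
  have hmaps : MapsTo (fun x : E => x - y) {x | x ≠ y} {v | v ≠ 0} :=
    fun x hx => sub_ne_zero.2 hx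
  have hexit : ContinuousOn (fun x => lensExitTime p q r y (x - y)) {x | x ≠ y} :=
    ContinuousOn.inf ((continuousOn_rayExitTime p r y).comp hsub hmaps)
      ((continuousOn_rayExitTime q r y).comp hsub hmaps)
  exact continuousOn_const.add (hexit.smul hsub)

end RadialProjection

section PowerCell

variable {k : ℕ} {U : Finset (EuclideanSpace ℝ (Fin k))} {p q c u x y : EuclideanSpace ℝ (Fin k)}
  {r α : ℝ}

lemma pcell_eq_biInter (U : Finset (EuclideanSpace ℝ (Fin k))) (c : EuclideanSpace ℝ (Fin k))
    (r α : ℝ) :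
    pcell U c r α = ⋂ u ∈ U, {x | ⟪u - c, x⟫ ≤ (r ^ 2 - α ^ 2 + ‖u‖ ^ 2 - ‖c‖ ^ 2) / 2} := by
  ext x
  simp only [pcell, mem_ofPred_eq, mem_iInter]
  refine forall₂_congr fun u _ => ?_
  rw [← sub_nonpos, ← sub_nonpos (b := (_ : ℝ) / 2)]
  constructor <;> intro h <;> linarith [dist_sq_sub_dist_sq_eq_inner x u c]

lemma convex_pcell (U : Finset (EuclideanSpace ℝ (Fin k))) (c : EuclideanSpace ℝ (Fin k))
    (r α : ℝ) : Convex ℝ (pcell U c r α) := by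
  rw [pcell_eq_biInter]
  exact convex_iInter₂ fun u _ => convex_halfSpace_le (innerₛₗ ℝ (u - c)).isLinear _

lemma convex_Zcell (U : Finset (EuclideanSpace ℝ (Fin k))) (p q : EuclideanSpace ℝ (Fin k))
    (r α : ℝ) : Convex ℝ (Zcell U p q r α) :=
  (convex_pcell U p r α).inter (convex_pcell U q r α)

lemma exists_dist_le_of_mem_offsetU (hU : U.Nonempty) (hx : x ∈ offsetU U α) :
    ∃ u ∈ U, dist x u ≤ α := by
  obtain ⟨u, hu, hxu⟩ := U.finite_toSet.isCompact.exists_infDist_eq_dist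
    (Finset.coe_nonempty.2 hU) x
  exact ⟨u, hu, hxu ▸ hx⟩

lemma notMem_interior_pcell (hU : U.Nonempty) (hnd : c ∈ U → α < r)
    (hx : x ∈ offsetU U α) (hxc : dist x c = r) : x ∉ interior (pcell U c r α) := by
  obtain ⟨u, hu, hxu⟩ := exists_dist_le_of_mem_offsetU hU hx
  have huc : u ≠ c := by
    rintro rfl
    exact (hnd hu).not_ge (hxc ▸ hxu)
  intro hint
  have hlt := interior_mono ((pcell_eq_biInter U c r α).trans_subset (biInter_subset_of_mem hu))
    hint
  rw [interior_setOf_inner_le (sub_ne_zero.2 huc), mem_ofPred_eq] at hlt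
  have hxu2 : dist x u ^ 2 ≤ α ^ 2 := pow_le_pow_left₀ dist_nonneg hxu 2
  have := dist_sq_sub_dist_sq_eq_inner x u c
  rw [hxc] at this
  linarith

lemma offsetU_inter_frontier_subset_Z0 (hU : U.Nonempty) (hr : 0 < r) (hndp : p ∈ U → α < r)
    (hndq : q ∈ U → α < r) :
    offsetU U α ∩ frontier (closedBall p r ∩ closedBall q r) ⊆ Z0 U p q r α := by
  rintro x ⟨hxU, hxF⟩
  refine ⟨mem_lens_of_mem_frontier hxF, fun hint => ?_⟩
  rcases dist_eq_or_dist_eq_of_mem_frontier hr.ne' hxF with hxp | hxq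
  · exact notMem_interior_pcell hU hndp hxU hxp (interior_mono inter_subset_left hint)
  · exact notMem_interior_pcell hU hndq hxU hxq (interior_mono inter_subset_right hint)

lemma Z0_subset_offsetU (hα : 0 ≤ α) : Z0 U p q r α ⊆ offsetU U α := by
  rintro x ⟨⟨hxp, hxq⟩, hxZ⟩
  by_contra hxU
  set W := ⋂ u ∈ U, ({z | dist z p ^ 2 - r ^ 2 < dist z u ^ 2 - α ^ 2} ∩
      {z | dist z q ^ 2 - r ^ 2 < dist z u ^ 2 - α ^ 2})
  have hWopen : IsOpen W :=
    isOpen_biInter_finset fun u _ => (isOpen_lt (by fun_prop) (by fun_prop)).inter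
      (isOpen_lt (by fun_prop) (by fun_prop))
  have hWZ : W ⊆ Zcell U p q r α := fun z hz =>
    ⟨fun u hu => (mem_iInter₂.1 hz u hu).1.le, fun u hu => (mem_iInter₂.1 hz u hu).2.le⟩
  refine hxZ (interior_maximal hWZ hWopen (mem_iInter₂.2 fun u hu => ?_))
  have hαu : α < dist x u := lt_of_not_ge fun h =>
    hxU ((infDist_le_dist_of_mem (Finset.mem_coe.2 hu)).trans h)
  have hαu2 : α ^ 2 < dist x u ^ 2 := pow_lt_pow_left₀ hαu hα two_ne_zero
  have hxp2 : dist x p ^ 2 ≤ r ^ 2 := pow_le_pow_left₀ dist_nonneg hxp 2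
  have hxq2 : dist x q ^ 2 ≤ r ^ 2 := pow_le_pow_left₀ dist_nonneg hxq 2
  rw [mem_inter_iff, mem_ofPred_eq, mem_ofPred_eq]
  constructor <;> linarith

lemma ne_of_mem_Z0 (hx : x ∈ Z0 U p q r α) (hy : y ∈ interior (Zcell U p q r α)) : x ≠ y :=
  fun h => hx.2 (h ▸ hy)

lemma lineMap_lensRadialProj_mem_Z0 (hy : y ∈ interior (Zcell U p q r α))
    (hyK : y ∈ closedBall p r ∩ closedBall q r) (hx : x ∈ Z0 U p q r α) {t : ℝ}
    (ht : t ∈ Icc (0 : ℝ) 1) :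
    (1 - t) • x + t • lensRadialProj p q r y x ∈ Z0 U p q r α := by
  have hxy := ne_of_mem_Z0 hx hy
  set s := lensExitTime p q r y (x - y)
  have hs : 1 ≤ s := one_le_lensExitTime hyK hx.1 hxy
  have hpt : (1 - t) • x + t • lensRadialProj p q r y x = y + (1 - t + t * s) • (x - y) := by
    simp only [lensRadialProj, s]
    module
  have ha : 1 ≤ 1 - t + t * s := by nlinarith [ht.1]
  rw [hpt]
  refine ⟨(add_smul_mem_lens_iff_le_lensExitTime hyK (sub_ne_zero.2 hxy) (by linarith)).2
    (by nlinarith [ht.2]), fun hint => hx.2 ?_⟩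
  exact (convex_Zcell U p q r α).mem_interior_of_add_smul_sub_mem_interior hy ha hint

lemma lensRadialProj_mem_offsetU_inter_frontier (hα : 0 ≤ α) (hr : r ≠ 0)
    (hy : y ∈ interior (Zcell U p q r α)) (hyK : y ∈ closedBall p r ∩ closedBall q r)
    (hx : x ∈ Z0 U p q r α) :
    lensRadialProj p q r y x ∈ offsetU U α ∩ frontier (closedBall p r ∩ closedBall q r) := by
  have hjx : lensRadialProj p q r y x ∈ Z0 U p q r α := by
    simpa using lineMap_lensRadialProj_mem_Z0 hy hyK hx (right_mem_Icc.2 zero_le_one)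
  exact ⟨Z0_subset_offsetU hα hjx, lensRadialProj_mem_frontier hr hyK (ne_of_mem_Z0 hx hy)⟩

end PowerCell

theorem stmt6_general {k : ℕ} (U : Finset (EuclideanSpace ℝ (Fin k))) (hU : U.Nonempty)
    (p q : EuclideanSpace ℝ (Fin k)) (r : ℝ) (hr : 0 < r) (α : ℝ) (hα : 0 ≤ α)
    (hndp : p ∈ U → α < r) (hndq : q ∈ U → α < r)
    (hne : ((closedBall p r ∩ closedBall q r) \ Z0 U p q r α).Nonempty) :
    (offsetU U α ∩ frontier (closedBall p r ∩ closedBall q r) ⊆ Z0 U p q r α) ∧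
    (∀ hsub : offsetU U α ∩ frontier (closedBall p r ∩ closedBall q r) ⊆ Z0 U p q r α,
      -- the inclusion map is a homotopy equivalence
      (∃ g : C(↥(Z0 U p q r α),
               ↥(offsetU U α ∩ frontier (closedBall p r ∩ closedBall q r))),
        ((⟨Set.inclusion hsub, continuous_inclusion hsub⟩ :
            C(↥(offsetU U α ∩ frontier (closedBall p r ∩ closedBall q r)),
              ↥(Z0 U p q r α))).comp g).Homotopic (ContinuousMap.id _) ∧
        (g.comp ⟨Set.inclusion hsub, continuous_inclusion hsub⟩).Homotopic
          (ContinuousMap.id _)) ∧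
      -- strong deformation retraction by radial projection and straight-line homotopy
      (∀ y ∈ interior (Zcell U p q r α) ∩ closedBall p r ∩ closedBall q r,
        ∃ j : EuclideanSpace ℝ (Fin k) → EuclideanSpace ℝ (Fin k),
          ContinuousOn j (Z0 U p q r α) ∧
          (∀ x ∈ Z0 U p q r α, ∃ s : ℝ, 0 ≤ s ∧ j x = y + s • (x - y)) ∧
          (∀ x ∈ Z0 U p q r α,
            j x ∈ offsetU U α ∩ frontier (closedBall p r ∩ closedBall q r)) ∧
          (∀ x ∈ offsetU U α ∩ frontier (closedBall p r ∩ closedBall q r), j x = x) ∧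
          (∀ x ∈ Z0 U p q r α, ∀ t ∈ Set.Icc (0:ℝ) 1,
            (1 - t) • x + t • j x ∈ Z0 U p q r α))) := by
  refine ⟨offsetU_inter_frontier_subset_Z0 hU hr hndp hndq, fun hsub => ⟨?_, ?_⟩⟩
  · obtain ⟨y, hyK, hyZ0⟩ := hne
    have hy : y ∈ interior (Zcell U p q r α) := not_not.1 fun h => hyZ0 ⟨hyK, h⟩
    exact exists_homotopic_of_segment_retraction hsub
      ((continuousOn_lensRadialProj p q r y).mono fun x hx => ne_of_mem_Z0 hx hy)
      (fun x hx => lensRadialProj_mem_offsetU_inter_frontier hα hr.ne' hy hyK hx)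
      (fun x hx => lensRadialProj_eq_self hr.ne' hyK hx.2)
      (fun x hx t ht => lineMap_lensRadialProj_mem_Z0 hy hyK hx ht)
  · rintro y ⟨⟨hy, hyp⟩, hyq⟩
    refine ⟨lensRadialProj p q r y,
      (continuousOn_lensRadialProj p q r y).mono fun x hx => ne_of_mem_Z0 hx hy,
      fun x hx => ⟨_, lensExitTime_nonneg ⟨hyp, hyq⟩ (sub_ne_zero.2 (ne_of_mem_Z0 hx hy)), rfl⟩,
      fun x hx => lensRadialProj_mem_offsetU_inter_frontier hα hr.ne' hy ⟨hyp, hyq⟩ hx,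
      fun x hx => lensRadialProj_eq_self hr.ne' ⟨hyp, hyq⟩ hx.2,
      fun x hx t ht => lineMap_lensRadialProj_mem_Z0 hy ⟨hyp, hyq⟩ hx ht⟩

/-- Intersection Power Cell Lemma: `U_α ∩ ∂(B_r(p) ∩ B_r(q)) ⊆ Z_0(α)`, the
inclusion of `U_α ∩ ∂(B_r(p) ∩ B_r(q))` into `Z_0(α)` is a homotopy equivalence, and indeed
`U_α ∩ ∂(B_r(p) ∩ B_r(q))` is a strong deformation retract of `Z_0(α)`, a deformation
retraction being given by radial projection from any point `y ∈ int Z(α) ∩ B_r(p) ∩ B_r(q)`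
together with the straight-line homotopy. -/
theorem stmt6 {k : ℕ} (U : Finset (EuclideanSpace ℝ (Fin k))) (hU : U.Nonempty)
    (p q : EuclideanSpace ℝ (Fin k)) (r : ℝ) (hr : 0 < r) (α : ℝ) (hα : 0 ≤ α)
    (hndp : p ∈ U → α < r) (hndq : q ∈ U → α < r) (hpq : dist p q < 2 * r)
    (hne : ((closedBall p r ∩ closedBall q r) \ Z0 U p q r α).Nonempty) :
    (offsetU U α ∩ frontier (closedBall p r ∩ closedBall q r) ⊆ Z0 U p q r α) ∧
    (∀ hsub : offsetU U α ∩ frontier (closedBall p r ∩ closedBall q r) ⊆ Z0 U p q r α,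
      -- the inclusion map is a homotopy equivalence
      (∃ g : C(↥(Z0 U p q r α),
               ↥(offsetU U α ∩ frontier (closedBall p r ∩ closedBall q r))),
        ((⟨Set.inclusion hsub, continuous_inclusion hsub⟩ :
            C(↥(offsetU U α ∩ frontier (closedBall p r ∩ closedBall q r)),
              ↥(Z0 U p q r α))).comp g).Homotopic (ContinuousMap.id _) ∧
        (g.comp ⟨Set.inclusion hsub, continuous_inclusion hsub⟩).Homotopic
          (ContinuousMap.id _)) ∧
      -- strong deformation retraction by radial projection and straight-line homotopy
      (∀ y ∈ interior (Zcell U p q r α) ∩ closedBall p r ∩ closedBall q r,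
        ∃ j : EuclideanSpace ℝ (Fin k) → EuclideanSpace ℝ (Fin k),
          ContinuousOn j (Z0 U p q r α) ∧
          (∀ x ∈ Z0 U p q r α, ∃ s : ℝ, 0 ≤ s ∧ j x = y + s • (x - y)) ∧
          (∀ x ∈ Z0 U p q r α,
            j x ∈ offsetU U α ∩ frontier (closedBall p r ∩ closedBall q r)) ∧
          (∀ x ∈ offsetU U α ∩ frontier (closedBall p r ∩ closedBall q r), j x = x) ∧
          (∀ x ∈ Z0 U p q r α, ∀ t ∈ Set.Icc (0:ℝ) 1,
            (1 - t) • x + t • j x ∈ Z0 U p q r α))) :=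
  stmt6_general U hU p q r hr α hα hndp hndq hne
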